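/- Let n ≥ 1 and let Q be a nonzero homogeneous polynomial of degree s in n complex variables. Then there exists a linear map R : 𝒫 → 𝒫 which preserves homogeneity (i.e., R maps each space P_l of homogeneous polynomials of degree l into the space P_{l+s} of homogeneous polynomials of degree l+s) and which is a right inverse of Q(D), i.e., Q(D)(R p) = p for every polynomial p ∈ 𝒫. -/

import Mathlib

open MvPolynomial

/-- The iterated partial derivative `∂^α = ∏ⱼ ∂ⱼ^{α j}` acting on polynomials in `n`
variables over `ℂ`. -/
noncomputable def pderivPow {n : ℕ} (α : Fin n →₀ ℕ) :
    Module.End ℂ (MvPolynomial (Fin n) ℂ) :=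
  ((List.finRange n).map fun j =>
    ((MvPolynomial.pderiv j).toLinearMap : Module.End ℂ (MvPolynomial (Fin n) ℂ)) ^ (α j)).prod

/-- For a polynomial `Q = ∑_α c_α x^α`, the constant-coefficient differential operator
`Q(D) = ∑_α c_α D^α`, where `D_j = -i ∂/∂x_j`. -/
noncomputable def QD {n : ℕ} (Q : MvPolynomial (Fin n) ℂ) :
    Module.End ℂ (MvPolynomial (Fin n) ℂ) :=
  ∑ α ∈ Q.support, (Q.coeff α * (-Complex.I) ^ (α.sum fun _ k => k)) • pderivPow α

/-!
Because `Q` is homogeneous, `Q(D) = (-i)^s Q(∂)`, and `Q ↦ Q(∂)` is an algebra homomorphism into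
the operators on polynomials. Writing `p̄` for `p` with conjugated coefficients, the constant
term of `p̄(∂) p` is `∑ α! |p_α|²`, so `p̄(∂) p = 0` forces `p = 0`. Applied to `p = Q̄ q`
(whose conjugate is `q̄ Q`), this makes `q ↦ Q(∂)(Q̄ q)` injective, hence bijective, on the
finite-dimensional space of homogeneous polynomials of degree `l`; so `Q(D)` maps degree `l + s`
onto degree `l`. Homogeneous preimages of the monomials, extended linearly, give the right
inverse.
-/

theorem MvPolynomial.IsHomogeneous.degree_eq_of_mem_support {σ R : Type*} [CommSemiring R]
    {φ : MvPolynomial σ R} {l : ℕ} (hφ : φ.IsHomogeneous l) {d : σ →₀ ℕ}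
    (hd : d ∈ φ.support) : d.degree = l := by
  rw [Finsupp.degree_eq_weight_one]
  exact hφ (mem_support_iff.1 hd)

theorem MvPolynomial.IsHomogeneous.linearMap_apply {σ τ R : Type*} [CommSemiring R] {s l : ℕ}
    (f : MvPolynomial σ R →ₗ[R] MvPolynomial τ R)
    (hf : ∀ β : σ →₀ ℕ, (f (monomial β 1)).IsHomogeneous (β.degree + s))
    {p : MvPolynomial σ R} (hp : p.IsHomogeneous l) : (f p).IsHomogeneous (l + s) := by
  rw [p.as_sum, map_sum]
  refine IsHomogeneous.sum _ _ _ fun β hβ => ?_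
  rw [← mul_one (p.coeff β), ← smul_eq_mul, ← smul_monomial, map_smul,
    ← hp.degree_eq_of_mem_support hβ]
  exact (homogeneousSubmodule τ R _).smul_mem _ (hf β)

section PderivIterate

variable {σ R : Type*} [CommSemiring R]

theorem pderiv_pow_monomial (j : σ) (k : ℕ) (β : σ →₀ ℕ) (c : R) :
    ((pderiv j).toLinearMap ^ k : Module.End R (MvPolynomial σ R)) (monomial β c) =
      monomial (β - Finsupp.single j k) ((β j).descFactorial k * c) := by
  classical
  induction k with
  | zero => simp
  | succ k ih =>
    rw [pow_succ', Module.End.mul_apply, ih, Derivation.coeFn_coe, pderiv_monomial,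
      tsub_tsub, ← Finsupp.single_add, Finsupp.tsub_apply, Finsupp.single_eq_same,
      Nat.descFactorial_succ]
    push_cast
    ring_nf

theorem list_prod_pderiv_pow_monomial [DecidableEq σ] (α β : σ →₀ ℕ) (c : R) {L : List σ}
    (hL : L.Nodup) :
    (L.map fun j => ((pderiv j).toLinearMap : Module.End R (MvPolynomial σ R)) ^ α j).prod
        (monomial β c) =
      monomial (β - ∑ j ∈ L.toFinset, Finsupp.single j (α j))
        ((∏ j ∈ L.toFinset, ((β j).descFactorial (α j) : R)) * c) := by
  induction L with
  | nil => simp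
  | cons j L ih =>
    obtain ⟨hj, hL⟩ := List.nodup_cons.1 hL
    have hj' : j ∉ L.toFinset := mt List.mem_toFinset.1 hj
    have hjL : (∑ i ∈ L.toFinset, Finsupp.single i (α i)) j = 0 := by
      rw [Finsupp.finsetSum_apply]
      exact Finset.sum_eq_zero fun i hi =>
        Finsupp.single_eq_of_ne (by rintro rfl; exact hj' hi)
    rw [List.map_cons, List.prod_cons, Module.End.mul_apply, ih hL, pderiv_pow_monomial,
      Finsupp.tsub_apply, hjL, Nat.sub_zero, tsub_tsub, List.toFinset_cons,
      Finset.sum_insert hj', Finset.prod_insert hj', add_comm, mul_assoc]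

end PderivIterate

section DifferentialOperators

variable {n : ℕ}

theorem pderivPow_monomial (α β : Fin n →₀ ℕ) (c : ℂ) :
    pderivPow α (monomial β c) =
      monomial (β - α) ((∏ j, (β j).descFactorial (α j) : ℕ) * c) := by
  rw [pderivPow, list_prod_pderiv_pow_monomial α β c (List.nodup_finRange n),
    List.toFinset_finRange, Finsupp.univ_sum_single, Nat.cast_prod]

theorem pderivPow_monomial_of_not_le {α β : Fin n →₀ ℕ} (h : ¬α ≤ β) (c : ℂ) :
    pderivPow α (monomial β c) = 0 := by
  obtain ⟨j, hj⟩ : ∃ j, β j < α j := by simpa [Finsupp.le_def] using h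
  rw [pderivPow_monomial, Finset.prod_eq_zero (Finset.mem_univ j)
    (Nat.descFactorial_eq_zero_iff_lt.2 hj), Nat.cast_zero, zero_mul, map_zero]

theorem pderivPow_zero : pderivPow (0 : Fin n →₀ ℕ) = 1 := by
  simp [pderivPow]

theorem pderivPow_add (α β : Fin n →₀ ℕ) :
    pderivPow (α + β) = pderivPow α * pderivPow β := by
  refine (basisMonomials (Fin n) ℂ).ext fun γ => ?_
  simp only [coe_basisMonomials, Module.End.mul_apply, pderivPow_monomial, tsub_tsub,
    add_comm β α]
  congr 1
  rw [← mul_assoc, ← Nat.cast_mul, ← Finset.prod_mul_distrib]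
  congr 3 with j
  rw [Finsupp.add_apply, Finsupp.tsub_apply, ← Nat.descFactorial_mul_descFactorial
    (Nat.le_add_left (β j) (α j)), Nat.add_sub_cancel]

open Nat in
theorem constantCoeff_pderivPow (α : Fin n →₀ ℕ) (p : MvPolynomial (Fin n) ℂ) :
    constantCoeff (pderivPow α p) = (∏ j, (α j)! : ℕ) * p.coeff α := by
  induction p using MvPolynomial.induction_on' with
  | add p q hp hq => rw [map_add, map_add, hp, hq, coeff_add, mul_add]
  | monomial β c =>
    by_cases hαβ : α ≤ β
    · rw [pderivPow_monomial, constantCoeff_monomial, coeff_monomial]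
      by_cases h : β = α
      · subst h
        simp [Nat.descFactorial_self]
      · rw [if_neg fun h0 => h (le_antisymm (tsub_eq_zero_iff_le.1 h0) hαβ), if_neg h, mul_zero]
    · rw [pderivPow_monomial_of_not_le hαβ, map_zero, coeff_monomial,
        if_neg (by rintro rfl; exact hαβ le_rfl), mul_zero]

theorem MvPolynomial.IsHomogeneous.pderivPow {α : Fin n →₀ ℕ} {l : ℕ}
    {p : MvPolynomial (Fin n) ℂ} (hp : p.IsHomogeneous (l + α.degree)) :
    (pderivPow α p).IsHomogeneous l := by
  rw [p.as_sum, map_sum]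
  refine IsHomogeneous.sum _ _ _ fun β hβ => ?_
  by_cases hαβ : α ≤ β
  · rw [pderivPow_monomial]
    apply isHomogeneous_monomial
    have := hp.degree_eq_of_mem_support hβ
    rw [← tsub_add_cancel_of_le hαβ, map_add] at this
    omega
  · rw [pderivPow_monomial_of_not_le hαβ]
    exact isHomogeneous_zero _ _ _

/-- `pderivOp Q` is the operator `Q(∂)`, obtained by substituting `∂ⱼ` for `xⱼ` in `Q`. -/
noncomputable def pderivOp :
    MvPolynomial (Fin n) ℂ →ₐ[ℂ] Module.End ℂ (MvPolynomial (Fin n) ℂ) :=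
  AddMonoidAlgebra.lift ℂ _ (Fin n →₀ ℕ)
    { toFun := fun α => pderivPow α.toAdd
      map_one' := pderivPow_zero
      map_mul' := fun α β => pderivPow_add α.toAdd β.toAdd }

theorem pderivOp_eq_sum (Q : MvPolynomial (Fin n) ℂ) :
    pderivOp Q = ∑ α ∈ Q.support, Q.coeff α • pderivPow α := by
  rw [pderivOp, AddMonoidAlgebra.lift_apply]
  rfl

theorem QD_eq_smul_pderivOp {s : ℕ} {Q : MvPolynomial (Fin n) ℂ} (hQ : Q.IsHomogeneous s) :
    QD Q = (-Complex.I) ^ s • pderivOp Q := by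
  rw [QD, pderivOp_eq_sum, Finset.smul_sum]
  refine Finset.sum_congr rfl fun α hα => ?_
  have hdeg : (α.sum fun _ k => k) = s := hQ.degree_eq_of_mem_support hα
  rw [hdeg, smul_smul, mul_comm]

theorem MvPolynomial.IsHomogeneous.pderivOp_apply {s l : ℕ} {Q p : MvPolynomial (Fin n) ℂ}
    (hQ : Q.IsHomogeneous s) (hp : p.IsHomogeneous (l + s)) :
    (pderivOp Q p).IsHomogeneous l := by
  rw [pderivOp_eq_sum, LinearMap.sum_apply]
  refine IsHomogeneous.sum _ _ _ fun α hα => ?_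
  rw [← hQ.degree_eq_of_mem_support hα] at hp
  exact (homogeneousSubmodule (Fin n) ℂ l).smul_mem _ hp.pderivPow

open Nat in
theorem constantCoeff_pderivOp_map_conj_self (p : MvPolynomial (Fin n) ℂ) :
    constantCoeff (pderivOp (map (starRingEnd ℂ) p) p) =
      ((∑ α ∈ p.support, (∏ j, (α j)! : ℕ) * Complex.normSq (p.coeff α) : ℝ) : ℂ) := by
  rw [pderivOp_eq_sum, support_map_of_injective _ (RingHom.injective _), LinearMap.sum_apply,
    map_sum, Complex.ofReal_sum]
  refine Finset.sum_congr rfl fun α _ => ?_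
  rw [LinearMap.smul_apply, constantCoeff_smul, constantCoeff_pderivPow, coeff_map, smul_eq_mul,
    Complex.ofReal_mul, Complex.normSq_eq_conj_mul_self, Complex.ofReal_natCast]
  ring

theorem eq_zero_of_pderivOp_map_conj_self {p : MvPolynomial (Fin n) ℂ}
    (h : pderivOp (map (starRingEnd ℂ) p) p = 0) : p = 0 := by
  have hsum := constantCoeff_pderivOp_map_conj_self p
  rw [h, map_zero, eq_comm, Complex.ofReal_eq_zero, Finset.sum_eq_zero_iff_of_nonneg
    fun α _ => mul_nonneg (Nat.cast_nonneg _) (Complex.normSq_nonneg _)] at hsum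
  refine support_eq_empty.1 (Finset.eq_empty_of_forall_notMem fun α hα => ?_)
  have hα0 := hsum α hα
  rw [mul_eq_zero, Nat.cast_eq_zero, Complex.normSq_eq_zero] at hα0
  exact hα0.elim (Finset.prod_ne_zero_iff.2 fun j _ => Nat.factorial_ne_zero _)
    (mem_support_iff.1 hα)

theorem map_conj_map_conj (p : MvPolynomial (Fin n) ℂ) :
    map (starRingEnd ℂ) (map (starRingEnd ℂ) p) = p := by
  ext α
  simp only [coeff_map, Complex.conj_conj]

theorem eq_zero_of_pderivOp_map_conj_mul {Q q : MvPolynomial (Fin n) ℂ} (hQ : Q ≠ 0)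
    (h : pderivOp Q (map (starRingEnd ℂ) Q * q) = 0) : q = 0 := by
  have hconj : map (starRingEnd ℂ) (map (starRingEnd ℂ) Q * q) = map (starRingEnd ℂ) q * Q := by
    rw [map_mul, map_conj_map_conj, mul_comm]
  have hprod := eq_zero_of_pderivOp_map_conj_self (p := map (starRingEnd ℂ) Q * q) (by
    rw [hconj, map_mul pderivOp, Module.End.mul_apply, h, map_zero])
  exact (mul_eq_zero.1 hprod).resolve_left
    ((map_ne_zero_iff _ (map_injective _ (RingHom.injective _))).2 hQ)

theorem exists_isHomogeneous_pderivOp_eq {s l : ℕ} {Q p : MvPolynomial (Fin n) ℂ} (hQ0 : Q ≠ 0)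
    (hQ : Q.IsHomogeneous s) (hp : p.IsHomogeneous l) :
    ∃ r, r.IsHomogeneous (l + s) ∧ pderivOp Q r = p := by
  have : Module.Finite ℂ (homogeneousSubmodule (Fin n) ℂ l) :=
    Module.Finite.iff_fg.2 (homogeneousSubmodule_fg _ _ _)
  set Q' := map (starRingEnd ℂ) Q
  have hQ'mul (q : MvPolynomial (Fin n) ℂ) (hq : q.IsHomogeneous l) :
      (Q' * q).IsHomogeneous (l + s) :=
    add_comm s l ▸ (hQ.map _).mul hq
  let T : Module.End ℂ (homogeneousSubmodule (Fin n) ℂ l) :=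
    (pderivOp Q ∘ₗ LinearMap.mulLeft ℂ Q').restrict fun q hq => hQ.pderivOp_apply (hQ'mul q hq)
  have hT : Function.Injective T :=
    (injective_iff_map_eq_zero T).2 fun q hq =>
      Subtype.ext (eq_zero_of_pderivOp_map_conj_mul hQ0 (congrArg Subtype.val hq))
  obtain ⟨q, hq⟩ := LinearMap.injective_iff_surjective.1 hT ⟨p, hp⟩
  exact ⟨Q' * q, hQ'mul q q.2, congrArg Subtype.val hq⟩

theorem exists_isHomogeneous_QD_eq {s l : ℕ} {Q p : MvPolynomial (Fin n) ℂ} (hQ0 : Q ≠ 0)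
    (hQ : Q.IsHomogeneous s) (hp : p.IsHomogeneous l) :
    ∃ r, r.IsHomogeneous (l + s) ∧ QD Q r = p := by
  obtain ⟨r, hr, hQr⟩ := exists_isHomogeneous_pderivOp_eq hQ0 hQ hp
  have hI : (-Complex.I) ^ s ≠ 0 := pow_ne_zero _ (neg_ne_zero.2 Complex.I_ne_zero)
  refine ⟨((-Complex.I) ^ s)⁻¹ • r, (homogeneousSubmodule _ ℂ (l + s)).smul_mem _ hr, ?_⟩
  rw [QD_eq_smul_pderivOp hQ, LinearMap.smul_apply, map_smul, hQr, smul_smul,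
    mul_inv_cancel₀ hI, one_smul]

end DifferentialOperators

theorem exists_homogeneity_preserving_right_inverse_of_QD_general {n : ℕ} {s : ℕ}
    (Q : MvPolynomial (Fin n) ℂ) (hQne : Q ≠ 0) (hQhom : Q.IsHomogeneous s) :
    ∃ R : MvPolynomial (Fin n) ℂ →ₗ[ℂ] MvPolynomial (Fin n) ℂ,
      (∀ (l : ℕ) (p : MvPolynomial (Fin n) ℂ), p.IsHomogeneous l →
        (R p).IsHomogeneous (l + s)) ∧
      ∀ p : MvPolynomial (Fin n) ℂ, QD Q (R p) = p := by
  choose g hg_hom hg using fun β : Fin n →₀ ℕ =>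
    exists_isHomogeneous_QD_eq hQne hQhom (isHomogeneous_monomial (1 : ℂ) rfl)
  let R := (basisMonomials (Fin n) ℂ).constr ℂ g
  have hR (β : Fin n →₀ ℕ) : R (monomial β 1) = g β :=
    (basisMonomials (Fin n) ℂ).constr_basis ℂ g β
  refine ⟨R, fun l p hp => hp.linearMap_apply R fun β => hR β ▸ hg_hom β, fun p => ?_⟩
  have hQR : QD Q ∘ₗ R = LinearMap.id :=
    (basisMonomials (Fin n) ℂ).ext fun β => by simp [hR, hg]
  exact LinearMap.congr_fun hQR p

/-- If `Q ≠ 0` is homogeneous of degree `s` in `n ≥ 1` complex variables, then there is a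
linear map `R : 𝒫 → 𝒫` that maps homogeneous polynomials of degree `l` to homogeneous
polynomials of degree `l + s` and is a right inverse of `Q(D)`. -/
theorem exists_homogeneity_preserving_right_inverse_of_QD {n : ℕ} (hn : 1 ≤ n) {s : ℕ}
    (Q : MvPolynomial (Fin n) ℂ) (hQne : Q ≠ 0) (hQhom : Q.IsHomogeneous s) :
    ∃ R : MvPolynomial (Fin n) ℂ →ₗ[ℂ] MvPolynomial (Fin n) ℂ,
      (∀ (l : ℕ) (p : MvPolynomial (Fin n) ℂ), p.IsHomogeneous l →
        (R p).IsHomogeneous (l + s)) ∧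
      ∀ p : MvPolynomial (Fin n) ℂ, QD Q (R p) = p :=
  exists_homogeneity_preserving_right_inverse_of_QD_general Q hQne hQhom
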